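/- Define for 0 < x the piecewise goal f_ℓ(x) = (1/x)·(1 - F_ℓ(c/x)), where F_ℓ is the c.d.f. of (1/ℓ)Σ_{i=1}^{ℓ}E_i with E_i i.i.d. Exp(1), i.e., 1 - F_ℓ(z) = e^{-ℓz} Σ_{j=0}^{ℓ-1} (ℓz)^j/j!. Then d/dx [f_ℓ(x)] = (e^{-ℓc/x}/x²) [ (ℓc/x)^ℓ/(ℓ-1)! - Σ_{j=0}^{ℓ-1} (ℓc/x)^j/j! ], so f_ℓ is increasing on (0, x_ℓ) and decreasing on (x_ℓ, ∞) where x_ℓ = ℓc/y_ℓ and y_ℓ is the unique positive root of y^ℓ/(ℓ-1)! = Σ_{j=0}^{ℓ-1} y^j/j!. Moreover x_ℓ ≥ c. -/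

import Mathlib

/-!
Write `S_ℓ(t) = ∑_{j<ℓ} t^j/j!` and `ℓ = n + 1`. Since `S_{n+1}' = S_n`, the derivative of
`e^{-t} S_{n+1}(t)` is `-e^{-t} t^n/n!`, and the chain rule through `t = ℓc/x` gives the
formula for `f_ℓ'`. Its bracket `t^{n+1}/n! - S_{n+1}(t)` has the sign of
`1/n! - S_{n+1}(t)/t^{n+1}`, and `S_{n+1}(t)/t^{n+1} = ∑_{j ≤ n} 1/(j! t^{n+1-j})` is strictly
decreasing, so the bracket changes sign exactly once, at the root `y`. Finally `y ≤ n + 1`: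
at `t = n + 1` the terms `t^j/j!` increase with `j ≤ n`, so `S_{n+1}(n+1) ≤ (n+1)·(n+1)^n/n!`,
i.e. the bracket is already nonnegative there.
-/

open Real Set Finset
open scoped Nat

noncomputable def expPartialSum (n : ℕ) (t : ℝ) : ℝ := ∑ j ∈ range n, t ^ j / j !

namespace expPartialSum

theorem succ (n : ℕ) (t : ℝ) : expPartialSum (n + 1) t = expPartialSum n t + t ^ n / n ! :=
  sum_range_succ _ _

theorem hasDerivAt_succ (n : ℕ) (t : ℝ) :
    HasDerivAt (expPartialSum (n + 1)) (expPartialSum n t) t := by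
  induction n with
  | zero =>
    have : expPartialSum 1 = fun _ => 1 := funext fun t => by simp [expPartialSum]
    simpa [this, expPartialSum] using hasDerivAt_const t (1 : ℝ)
  | succ n ih =>
    have : expPartialSum (n + 2) = fun t => expPartialSum (n + 1) t + t ^ (n + 1) / (n + 1)! :=
      funext fun t => succ (n + 1) t
    rw [this, succ]
    refine (ih.add ((hasDerivAt_pow (n + 1) t).div_const _)).congr_deriv ?_
    rw [Nat.factorial_succ]
    push_cast
    field_simp

theorem hasDerivAt_exp_neg_mul (n : ℕ) (t : ℝ) :
    HasDerivAt (fun t => exp (-t) * expPartialSum (n + 1) t) (-(exp (-t) * (t ^ n / n !))) t := by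
  refine ((hasDerivAt_neg t).exp.mul (hasDerivAt_succ n t)).congr_deriv ?_
  rw [succ]
  ring

theorem div_pow_eq_sum {n : ℕ} {t : ℝ} (ht : t ≠ 0) :
    expPartialSum n t / t ^ n = ∑ j ∈ range n, 1 / (j ! * t ^ (n - j)) := by
  rw [expPartialSum, sum_div]
  refine sum_congr rfl fun j hj => ?_
  have hsplit : t ^ n = t ^ j * t ^ (n - j) := by
    rw [← pow_add, Nat.add_sub_cancel' (mem_range.1 hj).le]
  rw [hsplit]
  field_simp

theorem strictAntiOn_div_pow {n : ℕ} (hn : 0 < n) :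
    StrictAntiOn (fun t => expPartialSum n t / t ^ n) (Ioi 0) := by
  intro s (hs : 0 < s) u (hu : 0 < u) hsu
  simp only [div_pow_eq_sum hs.ne', div_pow_eq_sum hu.ne']
  refine sum_lt_sum_of_nonempty ⟨0, mem_range.2 hn⟩ fun j hj => ?_
  have hpow : s ^ (n - j) < u ^ (n - j) :=
    pow_lt_pow_left₀ hsu hs.le (Nat.sub_ne_zero_of_lt (mem_range.1 hj))
  have hfact : (0 : ℝ) < j ! := by positivity
  exact one_div_lt_one_div_of_lt (mul_pos hfact (pow_pos hs _)) (mul_lt_mul_of_pos_left hpow hfact)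

theorem pow_div_factorial_le {t : ℝ} {j k : ℕ} (hjk : j ≤ k) (hkt : (k : ℝ) ≤ t) :
    t ^ j / j ! ≤ t ^ k / k ! := by
  induction k, hjk using Nat.le_induction with
  | base => rfl
  | succ k _ ih =>
    have hk : (k : ℝ) + 1 ≤ t := by exact_mod_cast hkt
    have ht : 0 ≤ t := by linarith [k.cast_nonneg (α := ℝ)]
    calc t ^ j / j ! ≤ t ^ k / k ! := ih (by linarith)
      _ ≤ t ^ k / k ! * (t / (k + 1)) :=
          le_mul_of_one_le_right (by positivity) ((one_le_div (by positivity)).2 hk)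
      _ = t ^ (k + 1) / (k + 1)! := by
          rw [Nat.factorial_succ]
          push_cast
          field_simp
          ring

theorem le_mul_last_term {n : ℕ} {t : ℝ} (hnt : (n : ℝ) ≤ t) :
    expPartialSum (n + 1) t ≤ (n + 1) * (t ^ n / n !) := by
  calc expPartialSum (n + 1) t ≤ ∑ _j ∈ range (n + 1), t ^ n / n ! :=
        sum_le_sum fun j hj => pow_div_factorial_le (Nat.lt_succ_iff.1 (mem_range.1 hj)) hnt
    _ = (n + 1) * (t ^ n / n !) := by simp

end expPartialSum

section root

open expPartialSum

variable {n : ℕ} {y : ℝ} (hy : 0 < y) (hroot : y ^ (n + 1) / n ! = expPartialSum (n + 1) y)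
include hy hroot

theorem expPartialSum_div_pow_root : expPartialSum (n + 1) y / y ^ (n + 1) = 1 / n ! := by
  rw [← hroot]
  field_simp

theorem expPartialSum_lt_of_root_lt {t : ℝ} (hyt : y < t) :
    expPartialSum (n + 1) t < t ^ (n + 1) / n ! := by
  have h : expPartialSum (n + 1) t / t ^ (n + 1) < expPartialSum (n + 1) y / y ^ (n + 1) :=
    strictAntiOn_div_pow n.add_one_pos (mem_Ioi.2 hy) (mem_Ioi.2 (hy.trans hyt)) hyt
  rw [expPartialSum_div_pow_root hy hroot, div_lt_iff₀ (pow_pos (hy.trans hyt) _)] at h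
  rwa [one_div_mul_eq_div] at h

theorem lt_expPartialSum_of_lt_root {t : ℝ} (ht : 0 < t) (hty : t < y) :
    t ^ (n + 1) / n ! < expPartialSum (n + 1) t := by
  have h : expPartialSum (n + 1) y / y ^ (n + 1) < expPartialSum (n + 1) t / t ^ (n + 1) :=
    strictAntiOn_div_pow n.add_one_pos (mem_Ioi.2 ht) (mem_Ioi.2 hy) hty
  rw [expPartialSum_div_pow_root hy hroot, lt_div_iff₀ (by positivity)] at h
  rwa [one_div_mul_eq_div] at h

theorem root_le_add_one : y ≤ n + 1 := by
  have hsucc : expPartialSum (n + 1) (n + 1) / (n + 1 : ℝ) ^ (n + 1) ≤ 1 / n ! := by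
    rw [div_le_iff₀ (by positivity), one_div_mul_eq_div, pow_succ', mul_div_assoc]
    exact le_mul_last_term (by linarith)
  rw [← expPartialSum_div_pow_root hy hroot] at hsucc
  exact (strictAntiOn_div_pow n.add_one_pos).le_iff_ge (mem_Ioi.2 (by positivity)) (mem_Ioi.2 hy)
    |>.1 hsucc

end root

/-- `f_ℓ(x)` with `a = ℓ c`, via `1 - F_ℓ(c/x) = e^{-a/x} S_ℓ(a/x)`. -/
noncomputable def misoGpr (ℓ : ℕ) (a x : ℝ) : ℝ :=
  1 / x * (exp (-a / x) * expPartialSum ℓ (a / x))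

theorem hasDerivAt_misoGpr (n : ℕ) (a : ℝ) {x : ℝ} (hx : x ≠ 0) :
    HasDerivAt (misoGpr (n + 1) a)
      (exp (-a / x) / x ^ 2 * ((a / x) ^ (n + 1) / (n !) - expPartialSum (n + 1) (a / x))) x := by
  have hquot : HasDerivAt (fun x => a / x) (-(a / x ^ 2)) x := by
    simpa [div_eq_mul_inv] using (hasDerivAt_inv hx).const_mul a
  have hinv : HasDerivAt (fun x : ℝ => 1 / x) (-(x ^ 2)⁻¹) x := by
    simpa [one_div] using hasDerivAt_inv hx
  have h := hinv.mul ((expPartialSum.hasDerivAt_exp_neg_mul n (a / x)).comp x hquot)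
  have hfun :
      misoGpr (n + 1) a = fun x => 1 / x * (exp (-(a / x)) * expPartialSum (n + 1) (a / x)) :=
    funext fun x => by rw [misoGpr, neg_div]
  rw [hfun]
  refine h.congr_deriv ?_
  simp only [Function.comp_apply]
  rw [neg_div, expPartialSum.succ, show a / x ^ 2 = a / x / x by ring]
  generalize a / x = t
  field_simp
  ring

section monotone

variable {n : ℕ} {a y : ℝ} (hy : 0 < y) (hroot : y ^ (n + 1) / n ! = expPartialSum (n + 1) y)
include hy hroot

theorem strictMonoOn_misoGpr : StrictMonoOn (misoGpr (n + 1) a) (Ioo 0 (a / y)) := by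
  refine strictMonoOn_of_deriv_pos (convex_Ioo 0 (a / y))
    (HasDerivAt.continuousOn fun x hx => hasDerivAt_misoGpr n a hx.1.ne') ?_
  rw [interior_Ioo]
  rintro x ⟨hx, hxy⟩
  rw [(hasDerivAt_misoGpr n a hx.ne').deriv]
  have hyt : y < a / x := by
    rw [lt_div_iff₀ hx]
    rwa [lt_div_iff₀ hy, mul_comm] at hxy
  exact mul_pos (by positivity) (sub_pos.2 (expPartialSum_lt_of_root_lt hy hroot hyt))

theorem strictAntiOn_misoGpr (ha : 0 < a) : StrictAntiOn (misoGpr (n + 1) a) (Ioi (a / y)) := by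
  have hpos : ∀ x ∈ Ioi (a / y), 0 < x := fun x hx => (div_pos ha hy).trans hx
  refine strictAntiOn_of_deriv_neg (convex_Ioi (a / y))
    (HasDerivAt.continuousOn fun x hx => hasDerivAt_misoGpr n a (hpos x hx).ne') ?_
  rw [interior_Ioi]
  intro x hx
  have hx0 := hpos x hx
  rw [(hasDerivAt_misoGpr n a hx0.ne').deriv]
  have hty : a / x < y := by
    rw [div_lt_iff₀ hx0]
    rwa [Set.mem_Ioi, div_lt_iff₀ hy, mul_comm] at hx
  exact mul_neg_of_pos_of_neg (by positivity)
    (sub_neg.2 (lt_expPartialSum_of_lt_root hy hroot (div_pos ha hx0) hty))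

end monotone

theorem miso_gpr_ell_antennas_general (c : ℝ) (hc : 0 < c) (ℓ : ℕ) (hℓ : 1 ≤ ℓ)
    (y : ℝ) (hy : 0 < y)
    (hroot : y ^ ℓ / (Nat.factorial (ℓ - 1)) = ∑ j ∈ Finset.range ℓ, y ^ j / (Nat.factorial j)) :
    (∀ x : ℝ, 0 < x →
      deriv (fun x : ℝ => (1 / x) * (Real.exp (-(ℓ * c) / x)
          * ∑ j ∈ Finset.range ℓ, ((ℓ * c) / x) ^ j / (Nat.factorial j))) x
        = Real.exp (-(ℓ * c) / x) / x ^ 2 *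
            (((ℓ * c) / x) ^ ℓ / (Nat.factorial (ℓ - 1)) -
              ∑ j ∈ Finset.range ℓ, ((ℓ * c) / x) ^ j / (Nat.factorial j))) ∧
    StrictMonoOn (fun x : ℝ => (1 / x) * (Real.exp (-(ℓ * c) / x)
        * ∑ j ∈ Finset.range ℓ, ((ℓ * c) / x) ^ j / (Nat.factorial j)))
      (Ioo 0 (ℓ * c / y)) ∧
    StrictAntiOn (fun x : ℝ => (1 / x) * (Real.exp (-(ℓ * c) / x)
        * ∑ j ∈ Finset.range ℓ, ((ℓ * c) / x) ^ j / (Nat.factorial j)))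
      (Ioi (ℓ * c / y)) ∧
    c ≤ ℓ * c / y := by
  obtain ⟨n, rfl⟩ := Nat.exists_eq_add_of_le' hℓ
  simp only [Nat.add_sub_cancel] at hroot ⊢
  have ha : (0 : ℝ) < (n + 1 : ℕ) * c := by positivity
  refine ⟨fun x hx => (hasDerivAt_misoGpr n _ hx.ne').deriv, strictMonoOn_misoGpr hy hroot,
    strictAntiOn_misoGpr hy hroot ha, ?_⟩
  rw [le_div_iff₀ hy, mul_comm]
  exact mul_le_mul_of_nonneg_right (by exact_mod_cast root_le_add_one hy hroot) hc.le

/-- MISO GPR over `ℓ` antennas: `f_ℓ(x) = (1/x)·e^{-ℓc/x} ∑_{j<ℓ} (ℓc/x)^j/j!` has derivative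
`(e^{-ℓc/x}/x²)·[(ℓc/x)^ℓ/(ℓ-1)! - ∑_{j<ℓ}(ℓc/x)^j/j!]`, is increasing on `(0, x_ℓ)` and
decreasing on `(x_ℓ, ∞)` where `x_ℓ = ℓc/y_ℓ` and `y_ℓ` is the unique positive root of
`y^ℓ/(ℓ-1)! = ∑_{j<ℓ} y^j/j!`; moreover `x_ℓ ≥ c`. -/
theorem miso_gpr_ell_antennas (c : ℝ) (hc : 0 < c) (ℓ : ℕ) (hℓ : 1 ≤ ℓ)
    (y : ℝ) (hy : 0 < y)
    (hroot : y ^ ℓ / (Nat.factorial (ℓ - 1)) = ∑ j ∈ Finset.range ℓ, y ^ j / (Nat.factorial j))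
    (huniq : ∀ z : ℝ, 0 < z →
      z ^ ℓ / (Nat.factorial (ℓ - 1)) = ∑ j ∈ Finset.range ℓ, z ^ j / (Nat.factorial j) →
      z = y) :
    (∀ x : ℝ, 0 < x →
      deriv (fun x : ℝ => (1 / x) * (Real.exp (-(ℓ * c) / x)
          * ∑ j ∈ Finset.range ℓ, ((ℓ * c) / x) ^ j / (Nat.factorial j))) x
        = Real.exp (-(ℓ * c) / x) / x ^ 2 *
            (((ℓ * c) / x) ^ ℓ / (Nat.factorial (ℓ - 1)) -
              ∑ j ∈ Finset.range ℓ, ((ℓ * c) / x) ^ j / (Nat.factorial j))) ∧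
    StrictMonoOn (fun x : ℝ => (1 / x) * (Real.exp (-(ℓ * c) / x)
        * ∑ j ∈ Finset.range ℓ, ((ℓ * c) / x) ^ j / (Nat.factorial j)))
      (Ioo 0 (ℓ * c / y)) ∧
    StrictAntiOn (fun x : ℝ => (1 / x) * (Real.exp (-(ℓ * c) / x)
        * ∑ j ∈ Finset.range ℓ, ((ℓ * c) / x) ^ j / (Nat.factorial j)))
      (Ioi (ℓ * c / y)) ∧
    c ≤ ℓ * c / y :=
  miso_gpr_ell_antennas_general c hc ℓ hℓ y hy hroot
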